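/- Let r : λ → ρ be a rewrite rule of an elementary rewrite theory (non-collapsing and left-linear), and let μ : s → t be a rewrite step with s = C[λσ] and t = C[ρσ] for a context C with a single hole and substitution σ. Let L be a labeling of μ as in the labeled rewrite-step construction (context, rule pattern, and substitution labeled with pairwise disjoint atomic label sets, all symbols of the contractum pattern labeled with the union of all labels of the redex pattern). Then for any position w ∈ Pos(t) that lies in the context part (w ∈ Pos(C), i.e., root(C|w) ≠ □), the set of origin positions of w, ◁_μ^L w = { v ∈ Pos(s) | ∃ p ∈ Pos(t), labels l_v of s at v and l_p of t at p with p ≤ w and l_v ⊆ l_p }, equals exactly the set of positions of C that are prefixes of w: { v ∈ Pos(C) | ∃ v', w = v.v' }. -/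
import Mathlib


open scoped Classical

abbrev Pos := List ℕ

/-- Ground terms over a signature `F` (variadic). -/
inductive GTerm (F : Type) : Type
  | fn : F → List (GTerm F) → GTerm F

/-- Term slices: terms over `F ∪ {•}`. -/
inductive STerm (F : Type) : Type
  | bullet : STerm F
  | fn : F → List (STerm F) → STerm F

/-- Terms with variables over `F`. -/
inductive VTerm (F : Type) : Type
  | var : ℕ → VTerm F
  | fn : F → List (VTerm F) → VTerm F

variable {F : Type}

def GTerm.subtermAt : Pos → GTerm F → Option (GTerm F)
  | [], t => some t
  | i :: p, .fn _ args => (args[i]?).bind (GTerm.subtermAt p)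

def GTerm.isPos (p : Pos) (t : GTerm F) : Prop := (GTerm.subtermAt p t).isSome

def GTerm.rootSym : GTerm F → F
  | .fn f _ => f

def GTerm.rootSymAt (p : Pos) (t : GTerm F) : Option F :=
  (GTerm.subtermAt p t).map GTerm.rootSym

def STerm.subtermAt : Pos → STerm F → Option (STerm F)
  | [], t => some t
  | _ :: _, .bullet => none
  | i :: p, .fn _ args => (args[i]?).bind (STerm.subtermAt p)

def STerm.rootSym : STerm F → Option F
  | .bullet => none
  | .fn f _ => some f

def STerm.rootSymAt (p : Pos) (t : STerm F) : Option F :=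
  (STerm.subtermAt p t).bind STerm.rootSym

/-- Non-`•` positions of a term slice. -/
def STerm.isPos (p : Pos) (t : STerm F) : Prop :=
  ∃ u, STerm.subtermAt p t = some u ∧ u ≠ .bullet

def VTerm.subtermAt : Pos → VTerm F → Option (VTerm F)
  | [], t => some t
  | _ :: _, .var _ => none
  | i :: p, .fn _ args => (args[i]?).bind (VTerm.subtermAt p)

def VTerm.rootSym : VTerm F → Option F
  | .var _ => none
  | .fn f _ => some f

def VTerm.rootSymAt (p : Pos) (t : VTerm F) : Option F :=
  (VTerm.subtermAt p t).bind VTerm.rootSym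

/-- Positions of the redex/contractum pattern: non-variable positions. -/
def VTerm.patPos (p : Pos) (t : VTerm F) : Prop :=
  ∃ f args, VTerm.subtermAt p t = some (.fn f args)

mutual
  def VTerm.subst (σ : ℕ → GTerm F) : VTerm F → GTerm F
    | .var n => σ n
    | .fn f args => .fn f (VTerm.substList σ args)
  def VTerm.substList (σ : ℕ → GTerm F) : List (VTerm F) → List (GTerm F)
    | [] => []
    | a :: as => VTerm.subst σ a :: VTerm.substList σ as
end

mutual
  def GTerm.replaceAt : GTerm F → Pos → GTerm F → GTerm F
    | _, [], r => r
    | .fn f args, i :: p, r => .fn f (GTerm.replaceAtList args i p r)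
  def GTerm.replaceAtList : List (GTerm F) → ℕ → Pos → GTerm F → List (GTerm F)
    | [], _, _, _ => []
    | a :: as, 0, p, r => GTerm.replaceAt a p r :: as
    | a :: as, n + 1, p, r => a :: GTerm.replaceAtList as n p r
end

mutual
  def STerm.replaceAt : STerm F → Pos → STerm F → STerm F
    | _, [], r => r
    | .bullet, _ :: _, _ => .bullet
    | .fn f args, i :: p, r => .fn f (STerm.replaceAtList args i p r)
  def STerm.replaceAtList : List (STerm F) → ℕ → Pos → STerm F → List (STerm F)
    | [], _, _, _ => []
    | a :: as, 0, p, r => STerm.replaceAt a p r :: as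
    | a :: as, n + 1, p, r => a :: STerm.replaceAtList as n p r
end

mutual
  noncomputable def GTerm.slRec (P : Set Pos) : GTerm F → Pos → STerm F
    | .fn f args, p =>
        if ∃ w, (p ++ w) ∈ P then .fn f (GTerm.slRecList P args p 0) else .bullet
  noncomputable def GTerm.slRecList (P : Set Pos) : List (GTerm F) → Pos → ℕ → List (STerm F)
    | [], _, _ => []
    | a :: as, p, i => GTerm.slRec P a (p ++ [i]) :: GTerm.slRecList P as p (i + 1)
end

/-- `slice(t,P)`. -/
noncomputable def GTerm.slice (t : GTerm F) (P : Set Pos) : STerm F := GTerm.slRec P t []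

/-- Concretization: `Conc t• t'` iff replacing the `•`s of `t•` by distinct fresh
variables yields a term more general than `t'`. -/
inductive Conc {F : Type} : STerm F → GTerm F → Prop
  | bullet (t : GTerm F) : Conc .bullet t
  | fn (f : F) (as : List (STerm F)) (bs : List (GTerm F))
      (hlen : as.length = bs.length)
      (h : ∀ (i : ℕ) (a : STerm F) (b : GTerm F),
            as[i]? = some a → bs[i]? = some b → Conc a b) :
      Conc (.fn f as) (.fn f bs)

/-- Origin positions `◁_μ^L w` of a labeled rewrite step `t0 → t1`. -/
def originSet {α : Type} (t0 t1 : GTerm F) (Ls Lt : Pos → Set α) (w : Pos) : Set Pos :=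
  {v | GTerm.isPos v t0 ∧ ∃ p, GTerm.isPos p t1 ∧ p <+: w ∧ Ls v ⊆ Lt p}

/-- A rewrite step with rule `lam → rho` at position `q`. -/
def RewritesAt (lam rho : VTerm F) (q : Pos) (t0 t1 : GTerm F) : Prop :=
  ∃ σ : ℕ → GTerm F, GTerm.subtermAt q t0 = some (VTerm.subst σ lam) ∧
    t1 = GTerm.replaceAt t0 q (VTerm.subst σ rho)

def leftLinear (lam : VTerm F) : Prop :=
  ∀ n p p', VTerm.subtermAt p lam = some (.var n) →
    VTerm.subtermAt p' lam = some (.var n) → p = p'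

def nonCollapsing (rho : VTerm F) : Prop := ∀ n, rho ≠ .var n
/-- The labeling of an (elementary) rewrite step `t0 = C[λσ] → C[ρσ] = t1` at hole
position `q`: every position of `t0` (context, redex pattern, substitution part) carries
a distinct fresh atomic label; context and substitution positions of `t1` carry the
same labels as the corresponding positions of `t0`; every contractum-pattern symbol of
`t1` carries the union of all the redex-pattern labels. -/
structure ElemStepLabeling (F α : Type) (lam rho : VTerm F) (q : Pos) (σ : ℕ → GTerm F)
    (t0 t1 : GTerm F) (Ls Lt : Pos → Set α) : Prop where
  hsub : GTerm.subtermAt q t0 = some (VTerm.subst σ lam)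
  hrepl : t1 = GTerm.replaceAt t0 q (VTerm.subst σ rho)
  atoms : ∀ v, GTerm.isPos v t0 → ∃ a, Ls v = {a}
  inj : ∀ v w, GTerm.isPos v t0 → GTerm.isPos w t0 → Ls v = Ls w → v = w
  ctx_eq : ∀ v, ¬ q <+: v → Lt v = Ls v
  contr : ∀ u', VTerm.patPos u' rho →
      Lt (q ++ u') = ⋃ v' ∈ {p : Pos | VTerm.patPos p lam}, Ls (q ++ v')
  subst_eq : ∀ (u' : Pos) (n : ℕ) (v'' : Pos), VTerm.subtermAt u' rho = some (.var n) →
      ∀ v', VTerm.subtermAt v' lam = some (.var n) →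
        Lt (q ++ u' ++ v'') = Ls (q ++ v' ++ v'')
lemma getElem?_replaceAtList {F : Type} (args : List (GTerm F)) (i : ℕ) (q : Pos)
    (r : GTerm F) (j : ℕ) :
    (GTerm.replaceAtList args i q r)[j]? =
      if j = i then (args[j]?).map (fun a => GTerm.replaceAt a q r) else args[j]? := by
  induction args generalizing i j with
  | nil => simp [GTerm.replaceAtList]
  | cons a as ih =>
    cases i with
    | zero =>
      cases j with
      | zero => simp [GTerm.replaceAtList]
      | succ j => simp [GTerm.replaceAtList]
    | succ i =>
      cases j with
      | zero => simp [GTerm.replaceAtList]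
      | succ j => simpa [GTerm.replaceAtList] using ih i j

lemma isPos_cons {F : Type} (i : ℕ) (q : Pos) (f : F) (args : List (GTerm F)) :
    GTerm.isPos (i :: q) (.fn f args) ↔ ∃ a, args[i]? = some a ∧ GTerm.isPos q a := by
  simp only [GTerm.isPos, GTerm.subtermAt]
  cases h : args[i]? <;> simp [Option.isSome_iff_exists, GTerm.isPos]

lemma isPos_replaceAt {F : Type} (q : Pos) (t0 r : GTerm F) (p : Pos)
    (hq : GTerm.isPos q t0) (hnp : ¬ q <+: p) :
    GTerm.isPos p (GTerm.replaceAt t0 q r) ↔ GTerm.isPos p t0 := by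
  induction q generalizing t0 p with
  | nil => exact absurd List.nil_prefix hnp
  | cons i q ih =>
    cases t0 with
    | fn f args =>
      obtain ⟨a, ha, hqa⟩ := (isPos_cons i q f args).1 hq
      cases p with
      | nil => simp [GTerm.isPos, GTerm.subtermAt, GTerm.replaceAt]
      | cons j p =>
        rw [List.cons_prefix_cons, not_and_or] at hnp
        show GTerm.isPos (j :: p) (.fn f (GTerm.replaceAtList args i q r)) ↔ _
        rw [isPos_cons, isPos_cons, getElem?_replaceAtList]
        by_cases hji : j = i
        · subst hji
          have hnqp : ¬ q <+: p := by
            rcases hnp with h | h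
            · exact absurd rfl h
            · exact h
          rw [if_pos rfl, ha]
          constructor
          · rintro ⟨b, hb, hbp⟩
            refine ⟨a, rfl, ?_⟩
            have : b = GTerm.replaceAt a q r := by simpa using hb.symm
            exact (ih a p hqa hnqp).1 (this ▸ hbp)
          · rintro ⟨b, hb, hbp⟩
            obtain rfl : a = b := by simpa using hb
            exact ⟨GTerm.replaceAt a q r, rfl, (ih a p hqa hnqp).2 hbp⟩
        · rw [if_neg hji]

theorem origin_of_context_position {F α : Type} (lam rho : VTerm F) (q : Pos)
    (σ : ℕ → GTerm F) (t0 t1 : GTerm F) (Ls Lt : Pos → Set α)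
    (hL : ElemStepLabeling F α lam rho q σ t0 t1 Ls Lt)
    (hll : leftLinear lam) (hnc : nonCollapsing rho)
    (w : Pos) (hw : GTerm.isPos w t1) (hwc : ¬ q <+: w) :
    originSet t0 t1 Ls Lt w = {v | GTerm.isPos v t0 ∧ ¬ q <+: v ∧ v <+: w} := by
  obtain ⟨hsub, hrepl, atoms, inj, ctx_eq, contr, subst_eq⟩ := hL
  have hq0 : GTerm.isPos q t0 := by simp [GTerm.isPos, hsub]
  ext v
  simp only [originSet, Set.mem_setOf_eq]
  constructor
  · rintro ⟨hv, p, hp, hpw, hsub'⟩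
    have hnqp : ¬ q <+: p := fun h => hwc (h.trans hpw)
    have hpt0 : GTerm.isPos p t0 := by
      rw [hrepl] at hp
      exact (isPos_replaceAt q t0 _ p hq0 hnqp).1 hp
    obtain ⟨a, ha⟩ := atoms v hv
    obtain ⟨b, hb⟩ := atoms p hpt0
    have hab : a = b := by
      have h := hsub'
      rw [ha, ctx_eq p hnqp, hb] at h
      simpa using h
    have hvp : v = p := inj v p hv hpt0 (by rw [ha, hb, hab])
    subst hvp
    exact ⟨hv, hnqp, hpw⟩
  · rintro ⟨hv, hnqv, hvw⟩
    refine ⟨hv, v, ?_, hvw, ?_⟩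
    · rw [hrepl]; exact (isPos_replaceAt q t0 _ v hq0 hnqv).2 hv
    · rw [ctx_eq v hnqv]
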